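/- Let l be the least common denominator of the right-hand sides b_1,…,b_m in the irredundant facet description of P. Then int(lP) ∩ ℤ^n = (lP)^(1) ∩ ℤ^n. In particular, μ(P) ≤ l·cd(P); and if P is a lattice polytope (so l = 1), then μ(P) ≤ cd(P). -/

import Mathlib

open scoped BigOperators Pointwise

noncomputable section

/-- Pairing `⟨a, x⟩ = ∑ aⱼ xⱼ` of an integer linear functional with a real point. -/
def ipair {n : ℕ} (a : Fin n → ℤ) (x : Fin n → ℝ) : ℝ := ∑ j, (a j : ℝ) * x j

/-- An integer vector is primitive if it is nonzero and not a nontrivial integer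
multiple of another integer vector. -/
def IsPrimitive {n : ℕ} (a : Fin n → ℤ) : Prop :=
  a ≠ 0 ∧ ∀ (k : ℤ) (b : Fin n → ℤ), a = k • b → IsUnit k

/-- The set of integer (lattice) points of `ℝⁿ`. -/
def IntPts (n : ℕ) : Set (Fin n → ℝ) := Set.range (fun z : Fin n → ℤ => fun j => (z j : ℝ))

/-- The dimension of a subset of `ℝⁿ` (the dimension of its affine hull). -/
def setDim {n : ℕ} (S : Set (Fin n → ℝ)) : ℕ := Module.finrank ℝ (vectorSpan ℝ S)

/-- An irredundant facet description `P = {x : A x ≥ b}` of an `n`-dimensional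
rational polytope: the rows `aᵢ` of `A` are primitive integer vectors, the right hand
sides are rational, `P` is bounded and `n`-dimensional, every inequality defines a facet
(a face of dimension `n-1`), and no inequality is repeated. -/
structure PolyDesc (n m : ℕ) : Type where
  hm : 0 < m
  A : Fin m → Fin n → ℤ
  b : Fin m → ℚ
  prim : ∀ i, IsPrimitive (A i)
  bounded : Bornology.IsBounded {x : Fin n → ℝ | ∀ i, (b i : ℝ) ≤ ipair (A i) x}
  fulldim : setDim {x : Fin n → ℝ | ∀ i, (b i : ℝ) ≤ ipair (A i) x} = n
  facet_dim : ∀ i, setDim {x : Fin n → ℝ |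
      (∀ j, (b j : ℝ) ≤ ipair (A j) x) ∧ ipair (A i) x = (b i : ℝ)} + 1 = n
  irredundant : Function.Injective (fun i => (A i, b i))

namespace PolyDesc

variable {n m : ℕ} (D : PolyDesc n m)

/-- The polytope `P` itself. -/
def pts : Set (Fin n → ℝ) := {x | ∀ i, (D.b i : ℝ) ≤ ipair (D.A i) x}

/-- Lattice distance `d_{Fᵢ}(x) = ⟨aᵢ, x⟩ - bᵢ` from (the hyperplane spanned by)
the `i`-th facet. -/
def dF (i : Fin m) (x : Fin n → ℝ) : ℝ := ipair (D.A i) x - (D.b i : ℝ)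

/-- Lattice distance `d_P(x) = minᵢ d_{Fᵢ}(x)` from the boundary of `P`. -/
def dist (x : Fin n → ℝ) : ℝ :=
  Finset.univ.inf'
    (Finset.univ_nonempty_iff.mpr (Fin.pos_iff_nonempty.mp D.hm))
    (fun i => D.dF i x)

/-- The adjoint polytope `P⁽ˢ⁾ = {x : d_P(x) ≥ s}`. -/
def adj (s : ℝ) : Set (Fin n → ℝ) := {x | s ≤ D.dist x}

/-- The `i`-th facet `Fᵢ` of `P`. -/
def facet (i : Fin m) : Set (Fin n → ℝ) := {x ∈ D.pts | ipair (D.A i) x = (D.b i : ℝ)}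

/-- The set `{s > 0 : P⁽ˢ⁾ ≠ ∅}`, whose supremum is `μ(P)⁻¹`. -/
def qcdInvSet : Set ℝ := {s : ℝ | 0 < s ∧ (D.adj s).Nonempty}

/-- `μ(P)⁻¹ = sup {s > 0 : P⁽ˢ⁾ ≠ ∅}`. -/
def qcdInv : ℝ := sSup D.qcdInvSet

/-- The ℚ-codegree `μ(P) = (sup {s > 0 : P⁽ˢ⁾ ≠ ∅})⁻¹`. -/
def qcd : ℝ := D.qcdInv⁻¹

/-- The core `core(P) = P^{(1/μ(P))}`. -/
def core : Set (Fin n → ℝ) := D.adj D.qcdInv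

/-- The codegree `cd(P) = min {k ∈ ℕ, k ≥ 1 : int(kP) ∩ ℤⁿ ≠ ∅}`. -/
def codeg : ℕ := sInf {k : ℕ | 0 < k ∧
  ∃ z : Fin n → ℤ, (fun j => (z j : ℝ)) ∈ interior ((k : ℝ) • D.pts)}

end PolyDesc

/-- The face of `S` on which the linear functional `u` is maximized. -/
def argFace {n : ℕ} (S : Set (Fin n → ℝ)) (u : Fin n → ℝ) : Set (Fin n → ℝ) :=
  {x ∈ S | ∀ y ∈ S, ∑ j, u j * y j ≤ ∑ j, u j * x j}

/-- `S` and `T` have the same normal fan: two linear functionals lie in the same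
(relatively open) cone of the normal fan of `S`, i.e. are maximized on the same face
of `S`, iff the same holds for `T`. -/
def SameNormalFan {n : ℕ} (S T : Set (Fin n → ℝ)) : Prop :=
  ∀ u v : Fin n → ℝ, (argFace S u = argFace S v ↔ argFace T u = argFace T v)

/-- The normal fan of `S` refines the normal fan of `T`. -/
def RefinesNormalFan {n : ℕ} (S T : Set (Fin n → ℝ)) : Prop :=
  ∀ u v : Fin n → ℝ, argFace S u = argFace S v → argFace T u = argFace T v

namespace PolyDesc
variable {n m : ℕ} (D : PolyDesc n m)

/-- `{s > 0 : N(P⁽ˢ⁾) = N(P)}`, whose supremum is `τ(P)⁻¹`. -/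
def nefInvSet : Set ℝ := {s : ℝ | 0 < s ∧ SameNormalFan (D.adj s) D.pts}

/-- `τ(P)⁻¹ = sup {s > 0 : N(P⁽ˢ⁾) = N(P)}`. -/
def nefInv : ℝ := sSup D.nefInvSet

/-- The nef value `τ(P)`. -/
def nefVal : ℝ := D.nefInv⁻¹

/-- The set of inequalities active at `x`; the normal cone of the minimal face of `P`
containing `x` is generated by `{aᵢ : i ∈ active x}`, and all cones of the normal fan
of `P` arise in this way. -/
def active (x : Fin n → ℝ) : Set (Fin m) := {i | ipair (D.A i) x = (D.b i : ℝ)}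

/-- The normal cone at the vertex `v` is ℚ-Gorenstein of index `r`, witnessed by the
primitive lattice point `u = u_σ` with `⟨aᵢ, u⟩ = r` for all active `i`. -/
def VertexQG (v : Fin n → ℝ) (u : Fin n → ℤ) (r : ℤ) : Prop :=
  IsPrimitive u ∧ 0 < r ∧ ∀ i ∈ D.active v, (∑ j, D.A i j * u j) = r

/-- The normal fan of `P` is ℚ-Gorenstein: every maximal cone (normal cone of a
vertex, i.e. of an extreme point) is ℚ-Gorenstein. -/
def QGorenstein : Prop := ∀ v ∈ Set.extremePoints ℝ D.pts, ∃ u r, D.VertexQG v u r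

end PolyDesc

/-- The point `v(s) = v + (s/r_σ) • u_σ`. -/
def vmove {n : ℕ} (v : Fin n → ℝ) (s : ℝ) (u : Fin n → ℤ) (r : ℤ) : Fin n → ℝ :=
  v + (s / (r : ℝ)) • (fun j => ((u j : ℝ)))

/-- The height of a point `y` in the cone generated by `{aᵢ : i ∈ I}`:
`ht(y) = max {∑ λᵢ : λᵢ ≥ 0, ∑ λᵢ aᵢ = y}`. -/
def coneHeight {n m : ℕ} (D : PolyDesc n m) (I : Set (Fin m)) (y : Fin n → ℝ) : ℝ :=
  sSup {t : ℝ | ∃ c : Fin m → ℝ, (∀ i, 0 ≤ c i) ∧ (∀ i ∉ I, c i = 0) ∧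
    (y = ∑ i, c i • (fun j => ((D.A i j : ℝ)))) ∧ t = ∑ i, c i}

/-- `P` is α-canonical: for every cone `σ` of the normal fan of `P` (the normal cone
of the minimal face containing a point `x ∈ P`, generated by `{aᵢ : i ∈ active x}`),
every nonzero lattice point of `σ` has height at least `α`. -/
def AlphaCanonical {n m : ℕ} (D : PolyDesc n m) (α : ℝ) : Prop :=
  ∀ x ∈ D.pts, ∀ z : Fin n → ℤ, z ≠ 0 →
    (∃ c : Fin m → ℝ, (∀ i, 0 ≤ c i) ∧ (∀ i ∉ D.active x, c i = 0) ∧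
      ((fun j => ((z j : ℝ))) = ∑ i, c i • (fun j => ((D.A i j : ℝ))))) →
    α ≤ coneHeight D (D.active x) (fun j => ((z j : ℝ)))

/-- `P` is a lattice polytope: the convex hull of finitely many integer points. -/
def IsLatticePoly {n : ℕ} (P : Set (Fin n → ℝ)) : Prop :=
  ∃ V : Finset (Fin n → ℤ),
    P = convexHull ℝ ((fun z : Fin n → ℤ => fun j => ((z j : ℝ))) '' (V : Set (Fin n → ℤ)))

/-- The `i`-th standard basis vector of `ℝᵗ`. -/
def stdBasisVec (t : ℕ) (i : Fin t) : Fin t → ℝ := fun j => if j = i then 1 else 0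

/-- The marking vectors of a Cayley sum: `0, e₁, …, e_t ∈ ℝᵗ`. -/
def cayleyVec (t : ℕ) : Fin (t + 1) → (Fin t → ℝ) :=
  fun j => if h : (j : ℕ) = 0 then 0 else stdBasisVec t ⟨(j : ℕ) - 1, by have := j.isLt; omega⟩

/-- The Cayley sum `Q₀ * ⋯ * Q_t = conv((Q₀ × {0}) ∪ (Q₁ × {e₁}) ∪ ⋯ ∪ (Q_t × {e_t}))`. -/
def cayleySum {k t : ℕ} (Q : Fin (t + 1) → Set (Fin k → ℝ)) :
    Set ((Fin k → ℝ) × (Fin t → ℝ)) :=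
  convexHull ℝ (⋃ j, (Q j) ×ˢ ({cayleyVec t j} : Set (Fin t → ℝ)))

/-- `P ⊆ ℝⁿ` is a Cayley polytope `P₀ * ⋯ * P_t` of length `t+1` of lattice polytopes
`Pⱼ ⊆ ℝᵏ` with `k + t = n`: some affine lattice isomorphism `ℤⁿ ≅ ℤᵏ × ℤᵗ`
identifies `P` with such a Cayley sum. -/
def IsCayley {n : ℕ} (P : Set (Fin n → ℝ)) (k t : ℕ) : Prop :=
  k + t = n ∧
  ∃ Q : Fin (t + 1) → Finset (Fin k → ℤ), (∀ j, (Q j).Nonempty) ∧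
  ∃ f : (Fin n → ℝ) ≃ᵃ[ℝ] (Fin k → ℝ) × (Fin t → ℝ),
    f '' IntPts n = (IntPts k) ×ˢ (IntPts t) ∧
    f '' P = cayleySum (fun j =>
      convexHull ℝ ((fun z : Fin k → ℤ => fun i => ((z i : ℝ))) '' (Q j : Set (Fin k → ℤ))))

/-- The unimodular simplex `Δₙ = conv(0, e₁, …, eₙ)`. -/
def unimodSimplex (n : ℕ) : Set (Fin n → ℝ) :=
  convexHull ℝ (insert (0 : Fin n → ℝ) (Set.range (stdBasisVec n)))

/-- Two subsets of `ℝⁿ` are unimodularly equivalent: an affine lattice automorphism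
maps one onto the other. -/
def UnimodEquiv {n : ℕ} (P P' : Set (Fin n → ℝ)) : Prop :=
  ∃ f : (Fin n → ℝ) ≃ᵃ[ℝ] (Fin n → ℝ), f '' IntPts n = IntPts n ∧ f '' P = P'

/-- The codegree `cd(P) = min {k ∈ ℕ, k ≥ 1 : int(kP) ∩ ℤⁿ ≠ ∅}` of a polytope given
as a set. -/
def codegS {n : ℕ} (P : Set (Fin n → ℝ)) : ℕ :=
  sInf {k : ℕ | 0 < k ∧ ∃ z : Fin n → ℤ, (fun j => (z j : ℝ)) ∈ interior ((k : ℝ) • P)}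

/-- `P` has lattice width one: some nonzero integer linear functional has minimum `c`
and maximum `c + 1` on `P`. -/
def HasLatticeWidthOne {n : ℕ} (P : Set (Fin n → ℝ)) : Prop :=
  ∃ u : Fin n → ℤ, u ≠ 0 ∧ ∃ c : ℤ,
    (∀ x ∈ P, (c : ℝ) ≤ ipair u x ∧ ipair u x ≤ (c : ℝ) + 1) ∧
    (∃ x ∈ P, ipair u x = (c : ℝ)) ∧ (∃ x ∈ P, ipair u x = (c : ℝ) + 1)

/-- `P` is a lattice pyramid: for some primitive `u`, `P` is the convex hull of a base
lying in the lattice hyperplane `{⟨u, ·⟩ = c}` and an apex at lattice distance one from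
it (this is equivalent to being unimodularly equivalent to
`conv((Q × {0}) ∪ {(0, …, 0, 1)})` for an `(n-1)`-dimensional lattice polytope `Q`). -/
def IsLatticePyramid {n : ℕ} (P : Set (Fin n → ℝ)) : Prop :=
  ∃ u : Fin n → ℤ, IsPrimitive u ∧ ∃ c : ℤ, ∃ apex ∈ P,
    ipair u apex = (c : ℝ) + 1 ∧
    P = convexHull ℝ ({x ∈ P | ipair u x = (c : ℝ)} ∪ {apex})

/-- `F` is a facet of `S`: an exposed face of dimension `dim S - 1`. -/
def IsFacetOf {n : ℕ} (F S : Set (Fin n → ℝ)) : Prop :=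
  IsExposed ℝ S F ∧ F.Nonempty ∧ setDim F + 1 = setDim S

/-!
For a lattice point `z`, the numbers `⟨aᵢ, z⟩` are integers, and so are the `l bᵢ`; hence the
strict inequalities `l bᵢ < ⟨aᵢ, z⟩` cutting out `int(lP)` already force `l bᵢ + 1 ≤ ⟨aᵢ, z⟩`.
Applied to `l z` for a lattice point `z ∈ int(kP)`, `k = cd(P)`, this puts `z / k` into
`P⁽¹ᐟ⁽ˡᵏ⁾⁾`, so `μ(P) ≤ lk`. For a lattice polytope all vertices are integral, so the right-hand
sides may be rounded up to integers without changing `P`, and the same argument runs with `l = 1`.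
-/

section Halfspaces

variable {n m : ℕ}

lemma ipair_add (a : Fin n → ℤ) (x y : Fin n → ℝ) : ipair a (x + y) = ipair a x + ipair a y := by
  simp only [ipair, Pi.add_apply, mul_add, Finset.sum_add_distrib]

lemma ipair_smul (a : Fin n → ℤ) (c : ℝ) (x : Fin n → ℝ) : ipair a (c • x) = c * ipair a x := by
  simp only [ipair, Pi.smul_apply, smul_eq_mul, Finset.mul_sum, mul_left_comm]

lemma ipair_intCast (a z : Fin n → ℤ) :
    ipair a (fun j => (z j : ℝ)) = ((a ⬝ᵥ z : ℤ) : ℝ) := by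
  simp [ipair, dotProduct]

def ipairLinear (a : Fin n → ℤ) : (Fin n → ℝ) →ₗ[ℝ] ℝ where
  toFun := ipair a
  map_add' := ipair_add a
  map_smul' := ipair_smul a

lemma continuous_ipair (a : Fin n → ℤ) : Continuous (ipair a) :=
  (ipairLinear a).continuous_of_finiteDimensional

lemma isOpenMap_ipair {a : Fin n → ℤ} (ha : a ≠ 0) : IsOpenMap (ipair a) := by
  refine (ipairLinear a).isOpenMap_of_finiteDimensional ?_
  refine (LinearMap.surjective_or_eq_zero (ipairLinear a)).resolve_right fun h0 => ha ?_
  ext j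
  have := LinearMap.congr_fun h0 (Pi.single j 1)
  simpa [ipairLinear, ipair, Pi.single_apply] using this

def polyhedron (A : Fin m → Fin n → ℤ) (β : Fin m → ℝ) : Set (Fin n → ℝ) :=
  {x | ∀ i, β i ≤ ipair (A i) x}

variable (A : Fin m → Fin n → ℤ) (β : Fin m → ℝ)

lemma polyhedron_eq_iInter : polyhedron A β = ⋂ i, ipair (A i) ⁻¹' Set.Ici (β i) := by
  ext x
  simp [polyhedron]

lemma convex_polyhedron : Convex ℝ (polyhedron A β) := by
  rw [polyhedron_eq_iInter]
  exact convex_iInter fun i => convex_halfSpace_ge (ipairLinear (A i)).isLinear (β i)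

lemma isClosed_polyhedron : IsClosed (polyhedron A β) := by
  rw [polyhedron_eq_iInter]
  exact isClosed_iInter fun i => isClosed_Ici.preimage (continuous_ipair (A i))

lemma interior_polyhedron (hA : ∀ i, A i ≠ 0) :
    interior (polyhedron A β) = {x | ∀ i, β i < ipair (A i) x} := by
  rw [polyhedron_eq_iInter, interior_iInter_of_finite]
  ext x
  simp [← (isOpenMap_ipair (hA _)).preimage_interior_eq_interior_preimage (continuous_ipair _)]

lemma smul_polyhedron {c : ℝ} (hc : 0 < c) :
    c • polyhedron A β = polyhedron A (c • β) := by
  ext x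
  simp only [Set.mem_smul_set_iff_inv_smul_mem₀ hc.ne', polyhedron, Set.mem_ofPred_eq,
    ipair_smul, Pi.smul_apply, smul_eq_mul]
  refine forall_congr' fun i => ?_
  rw [inv_mul_eq_div, le_div_iff₀ hc, mul_comm]

lemma intCast_mem_interior_polyhedron_iff {A : Fin m → Fin n → ℤ} (hA : ∀ i, A i ≠ 0)
    (B : Fin m → ℤ) (z : Fin n → ℤ) :
    (fun j => (z j : ℝ)) ∈ interior (polyhedron A (fun i => (B i : ℝ))) ↔
      ∀ i, (B i : ℝ) + 1 ≤ ipair (A i) (fun j => (z j : ℝ)) := by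
  rw [interior_polyhedron A _ hA]
  simp only [Set.mem_ofPred_eq, ipair_intCast]
  exact forall_congr' fun i => by exact_mod_cast Int.add_one_le_iff.symm

end Halfspaces

lemma Rat.exists_intCast_eq_mul_of_den_dvd {q : ℚ} {l : ℕ} (h : q.den ∣ l) :
    ∃ B : ℤ, (l : ℝ) * q = B := by
  obtain ⟨c, rfl⟩ := h
  refine ⟨c * q.num, ?_⟩
  have h := congrArg (fun r : ℚ => (c : ℝ) * r) (Rat.den_mul_eq_num q)
  push_cast at h ⊢
  linear_combination h

namespace PolyDesc

variable {n m : ℕ} (D : PolyDesc n m)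

lemma pts_eq_polyhedron : D.pts = polyhedron D.A (fun i => (D.b i : ℝ)) := rfl

lemma A_ne_zero (i : Fin m) : D.A i ≠ 0 := (D.prim i).1

lemma le_dist_iff {s : ℝ} {x : Fin n → ℝ} : s ≤ D.dist x ↔ ∀ i, s ≤ D.dF i x := by
  simp [dist, Finset.le_inf'_iff]

lemma interior_pts_nonempty : (interior D.pts).Nonempty := by
  have hne : D.pts.Nonempty := by
    by_contra h
    have hdim := D.fulldim
    rw [← pts, Set.not_nonempty_iff_eq_empty.mp h, setDim, vectorSpan_empty, finrank_bot] at hdim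
    have := D.facet_dim ⟨0, D.hm⟩
    omega
  have hspan : vectorSpan ℝ D.pts = ⊤ :=
    Submodule.eq_top_of_finrank_eq (by rw [Module.finrank_fin_fun]; exact D.fulldim)
  exact ((convex_polyhedron _ _).interior_nonempty_iff_affineSpan_eq_top).mpr
    ((AffineSubspace.affineSpan_eq_top_iff_vectorSpan_eq_top_of_nonempty ℝ _ _ hne).mpr hspan)

/-- `int P` contains a ball of radius `r`, so `int(kP)` contains one of radius `kr > 1`. -/
lemma exists_intPoint_mem_interior_smul_pts :
    ∃ k : ℕ, 0 < k ∧ ∃ z : Fin n → ℤ, (fun j => (z j : ℝ)) ∈ interior ((k : ℝ) • D.pts) := by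
  obtain ⟨x, hx⟩ := D.interior_pts_nonempty
  obtain ⟨r, hr, hball⟩ := Metric.isOpen_iff.mp isOpen_interior x hx
  obtain ⟨k, hk⟩ := exists_nat_gt r⁻¹
  have hk0 : (0 : ℝ) < k := (inv_pos.mpr hr).trans hk
  refine ⟨k, Nat.cast_pos.mp hk0, fun j => ⌊(k : ℝ) * x j⌋, ?_⟩
  rw [interior_smul₀ hk0.ne']
  refine Set.smul_set_mono hball ?_
  rw [smul_ball hk0.ne', Real.norm_natCast, Metric.mem_ball, dist_pi_lt_iff (by positivity)]
  intro j
  rw [Real.dist_eq, Pi.smul_apply, smul_eq_mul, abs_sub_comm]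
  calc |(k : ℝ) * x j - ⌊(k : ℝ) * x j⌋| < 1 := by
        rw [abs_of_nonneg (Int.fract_nonneg _)]; exact Int.fract_lt_one _
    _ < k * r := (inv_lt_iff_one_lt_mul₀ hr).mp hk

lemma codeg_spec :
    0 < D.codeg ∧ ∃ z : Fin n → ℤ, (fun j => (z j : ℝ)) ∈ interior ((D.codeg : ℝ) • D.pts) :=
  Nat.sInf_mem D.exists_intPoint_mem_interior_smul_pts

lemma bddAbove_qcdInvSet : BddAbove D.qcdInvSet := by
  let i₀ : Fin m := ⟨0, D.hm⟩
  have hcompact : IsCompact D.pts :=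
    Metric.isCompact_of_isClosed_isBounded (isClosed_polyhedron _ _) D.bounded
  obtain ⟨M, hM⟩ := hcompact.bddAbove_image (continuous_ipair (D.A i₀)).continuousOn
  refine ⟨M - D.b i₀, ?_⟩
  rintro s ⟨hs, x, hx⟩
  have hdist : ∀ i, s ≤ ipair (D.A i) x - D.b i := D.le_dist_iff.mp hx
  have hxP : x ∈ D.pts := fun i => by linarith [hdist i]
  linarith [hM ⟨x, hxP, rfl⟩, hdist i₀]

/-- A point of `(cP)⁽¹⁾` shrinks to a point of `P⁽¹ᐟᶜ⁾`. -/
lemma qcd_le_of_forall_add_one_le {c : ℝ} (hc : 0 < c) {x : Fin n → ℝ}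
    (hx : ∀ i, c * D.b i + 1 ≤ ipair (D.A i) x) : D.qcd ≤ c := by
  have hmem : c⁻¹ ∈ D.qcdInvSet := by
    refine ⟨inv_pos.mpr hc, c⁻¹ • x, D.le_dist_iff.mpr fun i => ?_⟩
    rw [dF, ipair_smul, le_sub_iff_add_le]
    calc c⁻¹ + D.b i = c⁻¹ * (c * D.b i + 1) := by field_simp; ring
      _ ≤ c⁻¹ * ipair (D.A i) x := by gcongr; exact hx i
  calc D.qcd = D.qcdInv⁻¹ := rfl
    _ ≤ c⁻¹⁻¹ := inv_anti₀ (inv_pos.mpr hc) (le_csSup D.bddAbove_qcdInvSet hmem)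
    _ = c := inv_inv c

/-- The vertices of a lattice polytope are integral, so rounding the right-hand sides up
does not cut anything off. -/
lemma pts_eq_polyhedron_ceil (h : IsLatticePoly D.pts) :
    D.pts = polyhedron D.A (fun i => (⌈D.b i⌉ : ℝ)) := by
  refine Set.Subset.antisymm ?_ fun x hx i =>
    (show (D.b i : ℝ) ≤ ⌈D.b i⌉ by exact_mod_cast Int.le_ceil (D.b i)).trans (hx i)
  · obtain ⟨V, hV⟩ := h
    rw [hV]
    refine convexHull_min ?_ (convex_polyhedron _ _)
    rintro _ ⟨w, hw, rfl⟩ i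
    have hwP : (fun j => (w j : ℝ)) ∈ D.pts := hV ▸ subset_convexHull ℝ _ ⟨w, hw, rfl⟩
    have hbw : (D.b i : ℝ) ≤ (D.A i ⬝ᵥ w : ℤ) := ipair_intCast (D.A i) w ▸ hwP i
    have hceil : ⌈D.b i⌉ ≤ D.A i ⬝ᵥ w := Int.ceil_le.mpr (by exact_mod_cast hbw)
    show (⌈D.b i⌉ : ℝ) ≤ _
    rw [ipair_intCast]
    exact_mod_cast hceil

/-- For a lattice point `z ∈ int(kP)`, `k = cd(P)`, integrality puts `cz` into `(ckP)⁽¹⁾`. -/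
lemma qcd_le_mul_codeg {c : ℕ} (hc : 0 < c) (B : Fin m → ℤ) (hbB : ∀ i, (c : ℝ) * D.b i ≤ B i)
    (hP : (c : ℝ) • D.pts = polyhedron D.A (fun i => (B i : ℝ))) :
    D.qcd ≤ c * D.codeg := by
  obtain ⟨hk, z, hz⟩ := D.codeg_spec
  have hkB : polyhedron D.A (fun i => ((D.codeg * B i : ℤ) : ℝ)) =
      (c : ℝ) • (D.codeg : ℝ) • D.pts := by
    rw [smul_comm, hP, smul_polyhedron _ _ (by positivity)]
    congr 1
    ext i
    push_cast
    rfl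
  have hcz : (fun j => ((c * z j : ℤ) : ℝ)) ∈
      interior (polyhedron D.A (fun i => ((D.codeg * B i : ℤ) : ℝ))) := by
    rw [hkB, interior_smul₀ (by positivity)]
    convert Set.smul_mem_smul_set hz using 1
    ext j
    push_cast
    rfl
  rw [intCast_mem_interior_polyhedron_iff D.A_ne_zero] at hcz
  refine D.qcd_le_of_forall_add_one_le (x := fun j => ((c * z j : ℤ) : ℝ)) (by positivity)
    fun i => ?_
  calc (c * D.codeg : ℝ) * D.b i + 1 = D.codeg * (c * D.b i) + 1 := by ring
    _ ≤ D.codeg * B i + 1 := by gcongr; exact hbB i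
    _ ≤ _ := by exact_mod_cast hcz i

end PolyDesc

/-- Let `l` be the least common denominator of the right hand sides
`b₁, …, b_m`. Then `int(lP) ∩ ℤⁿ = (lP)⁽¹⁾ ∩ ℤⁿ` (note
`(lP)⁽¹⁾ = {x : ⟨aᵢ, x⟩ ≥ l bᵢ + 1 for all i}`). In particular `μ(P) ≤ l · cd(P)`,
and if `P` is a lattice polytope (so that `l = 1`), then `μ(P) ≤ cd(P)`. -/
theorem statement3 {n m : ℕ} (D : PolyDesc n m) (l : ℕ)
    (hl : l = Finset.univ.lcm (fun i => (D.b i).den)) :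
    {z : Fin n → ℤ | (fun j => ((z j : ℝ))) ∈ interior ((l : ℝ) • D.pts)} =
      {z : Fin n → ℤ | ∀ i,
        (l : ℝ) * (D.b i : ℝ) + 1 ≤ ipair (D.A i) (fun j => ((z j : ℝ)))} ∧
    D.qcd ≤ (l : ℝ) * (D.codeg : ℝ) ∧
    (IsLatticePoly D.pts → D.qcd ≤ (D.codeg : ℝ)) := by
  have hl0 : 0 < l := by
    refine Nat.pos_of_ne_zero fun h0 => ?_
    obtain ⟨i, -, hi⟩ := Finset.lcm_eq_zero_iff.mp (hl ▸ h0)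
    exact (D.b i).den_nz hi
  choose B hB using fun i =>
    Rat.exists_intCast_eq_mul_of_den_dvd (hl ▸ Finset.dvd_lcm (Finset.mem_univ i))
  have hlP : (l : ℝ) • D.pts = polyhedron D.A (fun i => (B i : ℝ)) := by
    rw [D.pts_eq_polyhedron, smul_polyhedron _ _ (by positivity)]
    exact congrArg _ (funext hB)
  refine ⟨?_, D.qcd_le_mul_codeg hl0 B (fun i => (hB i).le) hlP, fun hlat => ?_⟩
  · ext z
    simp only [Set.mem_ofPred_eq, hlP, intCast_mem_interior_polyhedron_iff D.A_ne_zero, hB]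
  · simpa using D.qcd_le_mul_codeg one_pos (fun i => ⌈D.b i⌉)
      (fun i => by exact_mod_cast (one_mul (D.b i : ℝ)).trans_le (Int.le_ceil _))
      (by rw [Nat.cast_one, one_smul, ← D.pts_eq_polyhedron_ceil hlat])
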